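/- Let p, q > 1 and let α₁, α₂, β₁, β₂ be real numbers with -1 < α₁ < 0, -1 < β₂ < 0, α₂ > 0, β₁ > 0, satisfying (p-1-α₁)(q-1-β₂) - β₁ α₂ = 0 and β₁ = (q/p)(p-1-α₁). Then for all real numbers u > 0 and v > 0 one has u^{α₁+1} v^{β₁} + u^{α₂} v^{β₂+1} ≤ ((α₁+α₂+1)/p) · u^p + ((β₁+β₂+1)/q) · v^q. -/

import Mathlib

/-!
Each product on the left is a weighted geometric mean of `u ^ p` and `v ^ q`:
`u ^ (α₁ + 1) * v ^ β₁ = (u ^ p) ^ ((α₁ + 1) / p) * (v ^ q) ^ (β₁ / q)` and similarly for the second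
term. The constraint on `β₁` makes the weights of the first term sum to `1`, and `Θ = 0` then does
the same for the second, so two weighted AM-GM (Young) inequalities apply; adding them, the
coefficients collect to `(α₁ + α₂ + 1) / p` and `(β₁ + β₂ + 1) / q`.
-/

open Real

theorem rpow_mul_rpow_le_add {u v p q a b : ℝ} (hu : 0 ≤ u) (hv : 0 ≤ v) (hp : 0 < p)
    (hq : 0 < q) (ha : 0 ≤ a) (hb : 0 ≤ b) (hab : a / p + b / q = 1) :
    u ^ a * v ^ b ≤ a / p * u ^ p + b / q * v ^ q := by
  have h := geom_mean_le_arith_mean2_weighted (div_nonneg ha hp.le) (div_nonneg hb hq.le)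
    (rpow_nonneg hu p) (rpow_nonneg hv q) hab
  rwa [← rpow_mul hu, ← rpow_mul hv, mul_div_cancel₀ a hp.ne', mul_div_cancel₀ b hq.ne'] at h

theorem combined_young_homogeneous_general
    (p q α₁ α₂ β₁ β₂ : ℝ) (hp : 1 < p) (hq : 1 < q)
    (hα₁ : -1 < α₁) (hα₁' : α₁ < 0) (hβ₂ : -1 < β₂)
    (hα₂ : 0 < α₂) (hβ₁ : 0 < β₁)
    (hΘ : (p - 1 - α₁) * (q - 1 - β₂) - β₁ * α₂ = 0)
    (hβ₁eq : β₁ = (q / p) * (p - 1 - α₁)) :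
    ∀ u v : ℝ, 0 < u → 0 < v →
      u ^ (α₁ + 1) * v ^ β₁ + u ^ α₂ * v ^ (β₂ + 1) ≤
        ((α₁ + α₂ + 1) / p) * u ^ p + ((β₁ + β₂ + 1) / q) * v ^ q := by
  intro u v hu hv
  have hp₀ : 0 < p := by linarith
  have hq₀ : 0 < q := by linarith
  have hweights₁ : (α₁ + 1) / p + β₁ / q = 1 := by
    rw [hβ₁eq]; field_simp; ring
  have hα₂_dual : α₂ / p = (q - 1 - β₂) / q := by
    have h : (p - 1 - α₁) * ((q - 1 - β₂) / q - α₂ / p) = 0 := by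
      rw [← zero_div q, ← hΘ, hβ₁eq]; field_simp
    linarith [(mul_eq_zero.1 h).resolve_left (by linarith)]
  have hweights₂ : α₂ / p + (β₂ + 1) / q = 1 := by
    rw [hα₂_dual]; field_simp; ring
  have young₁ := rpow_mul_rpow_le_add hu.le hv.le hp₀ hq₀ (by linarith) hβ₁.le hweights₁
  have young₂ := rpow_mul_rpow_le_add hu.le hv.le hp₀ hq₀ hα₂.le (by linarith) hweights₂
  calc u ^ (α₁ + 1) * v ^ β₁ + u ^ α₂ * v ^ (β₂ + 1)
      ≤ ((α₁ + 1) / p * u ^ p + β₁ / q * v ^ q) + (α₂ / p * u ^ p + (β₂ + 1) / q * v ^ q) :=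
        add_le_add young₁ young₂
    _ = ((α₁ + α₂ + 1) / p) * u ^ p + ((β₁ + β₂ + 1) / q) * v ^ q := by ring

/-- Combined pointwise inequality in the homogeneous case: for `p, q > 1`,
`-1 < α₁ < 0`, `-1 < β₂ < 0`, `α₂, β₁ > 0`, with
`(p-1-α₁)(q-1-β₂) - β₁ α₂ = 0` and `β₁ = (q/p)(p-1-α₁)`, one has for all
`u, v > 0`:
`u^(α₁+1) v^β₁ + u^α₂ v^(β₂+1) ≤ ((α₁+α₂+1)/p) u^p + ((β₁+β₂+1)/q) v^q`.
Powers are real powers (`Real.rpow`). -/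
theorem combined_young_homogeneous
    (p q α₁ α₂ β₁ β₂ : ℝ) (hp : 1 < p) (hq : 1 < q)
    (hα₁ : -1 < α₁) (hα₁' : α₁ < 0) (hβ₂ : -1 < β₂) (hβ₂' : β₂ < 0)
    (hα₂ : 0 < α₂) (hβ₁ : 0 < β₁)
    (hΘ : (p - 1 - α₁) * (q - 1 - β₂) - β₁ * α₂ = 0)
    (hβ₁eq : β₁ = (q / p) * (p - 1 - α₁)) :
    ∀ u v : ℝ, 0 < u → 0 < v →
      u ^ (α₁ + 1) * v ^ β₁ + u ^ α₂ * v ^ (β₂ + 1) ≤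
        ((α₁ + α₂ + 1) / p) * u ^ p + ((β₁ + β₂ + 1) / q) * v ^ q :=
  combined_young_homogeneous_general p q α₁ α₂ β₁ β₂ hp hq hα₁ hα₁' hβ₂ hα₂ hβ₁ hΘ hβ₁eq
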